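/- arXiv:1708.06838 — 3 statements merged into one kernel-verified Lean document; each statement's English description precedes it below -/
import Mathlib

section
/- Let μ be a σ-finite measure on a measurable space X, let M > 0, and let p, q : X → [0,∞) be measurable functions with ∫ p dμ = ∫ q dμ = 1, with p ≤ M and q ≤ M μ-almost everywhere, with q > 0 μ-a.e. on {p > 0}, and such that x ↦ p(x)·log(p(x)/q(x)) is μ-integrable. Then ∫ p·log(p/q) dμ ≥ (1/(4M)) · ∫ (p − q)² dμ. -/
/-!
Pointwise, `1 - t⁻¹ ≤ log t` at `t = √p / √q` gives `p log(p/q) ≥ 2p - 2√(pq) = (√p - √q)² + (p - q)`;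
integrating and using `∫ p = ∫ q` bounds the KL divergence below by the squared Hellinger distance
`∫ (√p - √q)²`. Finally `(p - q)² = (√p - √q)² (√p + √q)²` and `(√p + √q)² ≤ 2 (p + q) ≤ 4M`.
-/

open MeasureTheory Real

lemma sq_sub_add_sq_sub_sq_le_sq_mul_log_div {a b : ℝ} (ha : 0 < a) (hb : 0 < b) :
    (a - b) ^ 2 + (a ^ 2 - b ^ 2) ≤ a ^ 2 * log (a ^ 2 / b ^ 2) := by
  have hlog : 1 - b / a ≤ log (a / b) := by
    simpa only [inv_div] using one_sub_inv_le_log_of_pos (div_pos ha hb)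
  calc (a - b) ^ 2 + (a ^ 2 - b ^ 2) = 2 * a ^ 2 * (1 - b / a) := by field_simp; ring
    _ ≤ 2 * a ^ 2 * log (a / b) := by gcongr
    _ = a ^ 2 * log (a ^ 2 / b ^ 2) := by rw [← div_pow, log_pow]; push_cast; ring

lemma sq_sqrt_sub_sqrt_add_sub_le_mul_log_div {p q : ℝ} (hp : 0 ≤ p) (hq : 0 ≤ q)
    (hqp : 0 < p → 0 < q) : (√p - √q) ^ 2 + (p - q) ≤ p * log (p / q) := by
  rcases hp.eq_or_lt with rfl | hp
  · simp [sq_sqrt hq]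
  · simpa only [sq_sqrt hp.le, sq_sqrt hq] using
      sq_sub_add_sq_sub_sq_le_sq_mul_log_div (sqrt_pos.2 hp) (sqrt_pos.2 (hqp hp))

lemma sq_sub_div_le_sq_sqrt_sub_sqrt {p q M : ℝ} (hp : 0 ≤ p) (hq : 0 ≤ q) (hpM : p ≤ M)
    (hqM : q ≤ M) : (p - q) ^ 2 / (4 * M) ≤ (√p - √q) ^ 2 := by
  refine div_le_of_le_mul₀ (by linarith) (sq_nonneg _) ?_
  have hsum : (√p + √q) ^ 2 ≤ 4 * M := by
    nlinarith [sq_sqrt hp, sq_sqrt hq, sq_nonneg (√p - √q)]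
  calc (p - q) ^ 2 = (√p - √q) ^ 2 * (√p + √q) ^ 2 := by
        rw [← mul_pow, ← sq_sqrt hp, ← sq_sqrt hq]; simp only [sqrt_sq (sqrt_nonneg _)]; ring
    _ ≤ (√p - √q) ^ 2 * (4 * M) := by gcongr

section Integral

variable {X : Type*} [MeasurableSpace X] {μ : Measure X} {p q : X → ℝ}

lemma integrable_sq_sqrt_sub_sqrt (hp : Integrable p μ) (hq : Integrable q μ) :
    Integrable (fun x => (√(p x) - √(q x)) ^ 2) μ := by
  refine (hp.norm.add hq.norm).mono' ?_ (Filter.Eventually.of_forall fun x => ?_)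
  · exact ((continuous_sqrt.comp_aestronglyMeasurable hp.1).sub
      (continuous_sqrt.comp_aestronglyMeasurable hq.1)).pow 2
  · have hsqrt_sq : ∀ t : ℝ, √t ^ 2 ≤ ‖t‖ := fun t => by
      rw [sq_sqrt', norm_eq_abs]; exact max_le (le_abs_self t) (abs_nonneg t)
    rw [norm_pow, norm_eq_abs, sq_abs, Pi.add_apply]
    nlinarith [hsqrt_sq (p x), hsqrt_sq (q x), mul_nonneg (sqrt_nonneg (p x)) (sqrt_nonneg (q x))]

lemma integral_sq_sqrt_sub_sqrt_le_integral_mul_log_div (hp0 : ∀ x, 0 ≤ p x)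
    (hq0 : ∀ x, 0 ≤ q x) (hqpos : ∀ᵐ x ∂μ, 0 < p x → 0 < q x) (hp : Integrable p μ)
    (hq : Integrable q μ) (hpq : ∫ x, p x ∂μ = ∫ x, q x ∂μ)
    (hlog : Integrable (fun x => p x * log (p x / q x)) μ) :
    ∫ x, (√(p x) - √(q x)) ^ 2 ∂μ ≤ ∫ x, p x * log (p x / q x) ∂μ := by
  have hH := integrable_sq_sqrt_sub_sqrt hp hq
  have hd : Integrable (fun x => p x - q x) μ := hp.sub hq
  calc ∫ x, (√(p x) - √(q x)) ^ 2 ∂μ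
      = ∫ x, ((√(p x) - √(q x)) ^ 2 + (p x - q x)) ∂μ := by
        rw [integral_add hH hd, integral_sub hp hq, hpq, sub_self, add_zero]
    _ ≤ ∫ x, p x * log (p x / q x) ∂μ := by
        refine integral_mono_ae (hH.add hd) hlog ?_
        filter_upwards [hqpos] with x hx
        exact sq_sqrt_sub_sqrt_add_sub_le_mul_log_div (hp0 x) (hq0 x) hx

end Integral

theorem KL_ge_squared_L2_of_bounded_general
    {X : Type*} [MeasurableSpace X] (μ : Measure X)
    (M : ℝ)
    (p q : X → ℝ)
    (hp0 : ∀ x, 0 ≤ p x) (hq0 : ∀ x, 0 ≤ q x)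
    (hpM : ∀ᵐ x ∂μ, p x ≤ M) (hqM : ∀ᵐ x ∂μ, q x ≤ M)
    (hpint : Integrable p μ) (hqint : Integrable q μ)
    (hp1 : ∫ x, p x ∂μ = 1) (hq1 : ∫ x, q x ∂μ = 1)
    (hqpos : ∀ᵐ x ∂μ, 0 < p x → 0 < q x)
    (hlogint : Integrable (fun x => p x * Real.log (p x / q x)) μ) :
    (1 / (4 * M)) * ∫ x, (p x - q x) ^ 2 ∂μ
      ≤ ∫ x, p x * Real.log (p x / q x) ∂μ := by
  calc (1 / (4 * M)) * ∫ x, (p x - q x) ^ 2 ∂μ = ∫ x, (p x - q x) ^ 2 / (4 * M) ∂μ := by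
        rw [integral_div, one_div_mul_eq_div]
    _ ≤ ∫ x, (√(p x) - √(q x)) ^ 2 ∂μ := by
        refine integral_mono_of_nonneg ?_ (integrable_sq_sqrt_sub_sqrt hpint hqint) ?_
        · filter_upwards [hpM] with x hx
          exact div_nonneg (sq_nonneg _) (by linarith [hp0 x])
        · filter_upwards [hpM, hqM] with x hpx hqx
          exact sq_sub_div_le_sq_sqrt_sub_sqrt (hp0 x) (hq0 x) hpx hqx
    _ ≤ ∫ x, p x * log (p x / q x) ∂μ :=
        integral_sq_sqrt_sub_sqrt_le_integral_mul_log_div hp0 hq0 hqpos hpint hqint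
          (hp1.trans hq1.symm) hlogint

/-- **Kullback–Leibler dominates the squared L₂ distance for bounded densities**
(combined lower bound used in the proof of Lemma 2 of the paper). For probability
densities `p, q` bounded by `M` a.e., with `q > 0` a.e. on `{p > 0}` and `p·log(p/q)`
integrable, `∫ p·log(p/q) dμ ≥ (1/(4M)) · ∫ (p − q)² dμ`. -/
theorem KL_ge_squared_L2_of_bounded
    {X : Type*} [MeasurableSpace X] (μ : Measure X) [SigmaFinite μ]
    (M : ℝ) (hM : 0 < M)
    (p q : X → ℝ) (hpm : Measurable p) (hqm : Measurable q)
    (hp0 : ∀ x, 0 ≤ p x) (hq0 : ∀ x, 0 ≤ q x)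
    (hpM : ∀ᵐ x ∂μ, p x ≤ M) (hqM : ∀ᵐ x ∂μ, q x ≤ M)
    (hpint : Integrable p μ) (hqint : Integrable q μ)
    (hp1 : ∫ x, p x ∂μ = 1) (hq1 : ∫ x, q x ∂μ = 1)
    (hqpos : ∀ᵐ x ∂μ, 0 < p x → 0 < q x)
    (hlogint : Integrable (fun x => p x * Real.log (p x / q x)) μ) :
    (1 / (4 * M)) * ∫ x, (p x - q x) ^ 2 ∂μ
      ≤ ∫ x, p x * Real.log (p x / q x) ∂μ :=
  KL_ge_squared_L2_of_bounded_general μ M p q hp0 hq0 hpM hqM hpint hqint hp1 hq1 hqpos hlogint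
end

section
/- Let τ > 0 and 0 ≤ q < τ. Let f₀ : [0,τ] → ℝ be a measurable function with f₀(t) ≥ c₁ for all t ∈ [0,τ], where c₁ > 0, and with ∫_0^τ f₀(t) dt ≤ 1. Then for every measurable function g : [q,τ] → ℝ, one has ∫_q^τ ( ∫_q^t g(u) du )² f₀(t) dt ≤ (τ/c₁) · ∫_q^τ g(u)² f₀(u) du (both sides interpreted in [0,∞]). -/
/-!
By Cauchy–Schwarz, `(∫_q^t g)² ≤ (t - q) ∫_q^t g² ≤ τ ∫_q^τ g²` for every `t ∈ (q, τ]`,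
and the lower bound `f₀ ≥ c₁` turns `∫_q^τ g²` into at most `c₁⁻¹ ∫_q^τ g² f₀`. Integrating
this uniform bound against `f₀` over `(q, τ]` costs at most the factor `∫ f₀ ≤ 1`.
-/

open MeasureTheory Set

theorem sq_lintegral_le_measure_univ_mul_lintegral_sq {α : Type*} [MeasurableSpace α]
    (μ : Measure α) {f : α → ENNReal} (hf : AEMeasurable f μ) :
    (∫⁻ x, f x ∂μ) ^ 2 ≤ μ univ * ∫⁻ x, f x ^ 2 ∂μ := by
  have holder := ENNReal.lintegral_mul_le_Lp_mul_Lq μ Real.HolderConjugate.two_two hf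
    (aemeasurable_const (b := (1 : ENNReal)))
  simp only [Pi.mul_apply, mul_one, ENNReal.one_rpow, lintegral_const, one_mul] at holder
  calc (∫⁻ x, f x ∂μ) ^ 2
      ≤ ((∫⁻ x, f x ^ (2 : ℝ) ∂μ) ^ (1 / 2 : ℝ) * μ univ ^ (1 / 2 : ℝ)) ^ 2 :=
        pow_le_pow_left' holder 2
    _ = μ univ * ∫⁻ x, f x ^ 2 ∂μ := by
        simp only [mul_pow, ← ENNReal.rpow_natCast, ← ENNReal.rpow_mul]
        norm_num [mul_comm]

theorem ENNReal.ofReal_sq_eq_enorm_sq (x : ℝ) : ENNReal.ofReal (x ^ 2) = ‖x‖ₑ ^ 2 := by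
  rw [Real.enorm_eq_ofReal_abs, ← ENNReal.ofReal_pow (abs_nonneg x), sq_abs]

theorem ofReal_sq_intervalIntegral_le {g : ℝ → ℝ} (hg : AEMeasurable g) {a b : ℝ}
    (hab : a ≤ b) :
    ENNReal.ofReal ((∫ u in a..b, g u) ^ 2)
      ≤ ENNReal.ofReal (b - a) * ∫⁻ u in Ioc a b, ENNReal.ofReal (g u ^ 2) := by
  simp only [ENNReal.ofReal_sq_eq_enorm_sq, intervalIntegral.integral_of_le hab]
  calc ‖∫ u in Ioc a b, g u‖ₑ ^ 2
      ≤ (∫⁻ u in Ioc a b, ‖g u‖ₑ) ^ 2 :=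
        pow_le_pow_left' (enorm_integral_le_lintegral_enorm _) 2
    _ ≤ ENNReal.ofReal (b - a) * ∫⁻ u in Ioc a b, ‖g u‖ₑ ^ 2 := by
        simpa using sq_lintegral_le_measure_univ_mul_lintegral_sq (volume.restrict (Ioc a b))
          hg.enorm.restrict

theorem setLIntegral_le_inv_mul_setLIntegral_mul {α : Type*} [MeasurableSpace α] {μ : Measure α}
    {s : Set α} (hs : MeasurableSet s) {f w : α → ENNReal} {c : ENNReal} (hc₀ : c ≠ 0)
    (hc : c ≠ ⊤) (hw : ∀ x ∈ s, c ≤ w x) :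
    ∫⁻ x in s, f x ∂μ ≤ c⁻¹ * ∫⁻ x in s, f x * w x ∂μ := by
  rw [← lintegral_const_mul' _ _ (ENNReal.inv_ne_top.2 hc₀)]
  refine setLIntegral_mono' hs fun x hx => ?_
  calc f x = c⁻¹ * (f x * c) := by rw [mul_left_comm, ENNReal.inv_mul_cancel hc₀ hc, mul_one]
    _ ≤ c⁻¹ * (f x * w x) := by gcongr; exact hw x hx

theorem second_moment_increment_bound_general
    (τ q c₁ : ℝ) (hq : 0 ≤ q) (hc₁ : 0 < c₁)
    (f₀ : ℝ → ℝ) (hf₀m : Measurable f₀)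
    (hf₀low : ∀ t ∈ Set.Icc (0:ℝ) τ, c₁ ≤ f₀ t)
    (hf₀int : ∫⁻ t in Set.Ioc (0:ℝ) τ, ENNReal.ofReal (f₀ t) ∂(volume : Measure ℝ) ≤ 1)
    (g : ℝ → ℝ) (hg : Measurable g) :
    ∫⁻ t in Set.Ioc q τ, ENNReal.ofReal ((∫ u in q..t, g u) ^ 2 * f₀ t) ∂(volume : Measure ℝ)
      ≤ ENNReal.ofReal (τ / c₁)
        * ∫⁻ u in Set.Ioc q τ, ENNReal.ofReal (g u ^ 2 * f₀ u) ∂(volume : Measure ℝ) := by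
  set J := ∫⁻ u in Ioc q τ, ENNReal.ofReal (g u ^ 2)
  have increment_le :
      ∀ t ∈ Ioc q τ, ENNReal.ofReal ((∫ u in q..t, g u) ^ 2) ≤ ENNReal.ofReal τ * J :=
    fun t ht => (ofReal_sq_intervalIntegral_le hg.aemeasurable ht.1.le).trans <|
      mul_le_mul' (ENNReal.ofReal_le_ofReal (by linarith [ht.2]))
        (lintegral_mono_set (Ioc_subset_Ioc_right ht.2))
  have J_le :
      J ≤ (ENNReal.ofReal c₁)⁻¹ * ∫⁻ u in Ioc q τ, ENNReal.ofReal (g u ^ 2 * f₀ u) := by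
    simp only [ENNReal.ofReal_mul (sq_nonneg _)]
    exact setLIntegral_le_inv_mul_setLIntegral_mul measurableSet_Ioc
      (ENNReal.ofReal_pos.2 hc₁).ne' ENNReal.ofReal_ne_top
      fun u hu => ENNReal.ofReal_le_ofReal (hf₀low u ⟨hq.trans hu.1.le, hu.2⟩)
  have mass_le_one : ∫⁻ t in Ioc q τ, ENNReal.ofReal (f₀ t) ≤ 1 :=
    (lintegral_mono_set (Ioc_subset_Ioc_left hq)).trans hf₀int
  calc ∫⁻ t in Ioc q τ, ENNReal.ofReal ((∫ u in q..t, g u) ^ 2 * f₀ t)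
      = ∫⁻ t in Ioc q τ,
          ENNReal.ofReal ((∫ u in q..t, g u) ^ 2) * ENNReal.ofReal (f₀ t) := by
        simp only [ENNReal.ofReal_mul (sq_nonneg _)]
    _ ≤ ∫⁻ t in Ioc q τ, ENNReal.ofReal τ * J * ENNReal.ofReal (f₀ t) :=
        setLIntegral_mono' measurableSet_Ioc fun t ht => mul_le_mul_left (increment_le t ht) _
    _ = ENNReal.ofReal τ * J * ∫⁻ t in Ioc q τ, ENNReal.ofReal (f₀ t) :=
        lintegral_const_mul'' _ hf₀m.ennreal_ofReal.aemeasurable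
    _ ≤ ENNReal.ofReal τ * J := mul_le_of_le_one_right' mass_le_one
    _ ≤ ENNReal.ofReal τ * ((ENNReal.ofReal c₁)⁻¹ * _) := by gcongr
    _ = ENNReal.ofReal (τ / c₁) * _ := by
        rw [ENNReal.ofReal_div_of_pos hc₁, div_eq_mul_inv, mul_assoc]

/-- **Core analytic inequality in the derivation of (formula2) in the proof of Lemma 2
of the paper.** If `f₀ ≥ c₁ > 0` on `[0,τ]` with `∫_0^τ f₀ ≤ 1`, then for every
measurable `g`, `∫_q^τ (∫_q^t g(u) du)² f₀(t) dt ≤ (τ/c₁) · ∫_q^τ g(u)² f₀(u) du`,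
both sides interpreted in `[0,∞]`. -/
theorem second_moment_increment_bound
    (τ q c₁ : ℝ) (hτ : 0 < τ) (hq : 0 ≤ q) (hqτ : q < τ) (hc₁ : 0 < c₁)
    (f₀ : ℝ → ℝ) (hf₀m : Measurable f₀)
    (hf₀low : ∀ t ∈ Set.Icc (0:ℝ) τ, c₁ ≤ f₀ t)
    (hf₀int : ∫⁻ t in Set.Ioc (0:ℝ) τ, ENNReal.ofReal (f₀ t) ∂(volume : Measure ℝ) ≤ 1)
    (g : ℝ → ℝ) (hg : Measurable g) :
    ∫⁻ t in Set.Ioc q τ, ENNReal.ofReal ((∫ u in q..t, g u) ^ 2 * f₀ t) ∂(volume : Measure ℝ)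
      ≤ ENNReal.ofReal (τ / c₁)
        * ∫⁻ u in Set.Ioc q τ, ENNReal.ofReal (g u ^ 2 * f₀ u) ∂(volume : Measure ℝ) :=
  second_moment_increment_bound_general τ q c₁ hq hc₁ f₀ hf₀m hf₀low hf₀int g hg
end

section
/- Fix constants 0 < a ≤ b, τ > 0, η > 0, c₀ > 0, z₀ > 0 and a dimension d ≥ 1. For β ∈ ℝ^d with |β| ≤ c₀ and a measurable function λ : [0,τ] → [a,b], write Λ(t) = ∫_0^t λ(u) du, and for an observation x = (t,u,v,q,z,δ₁,δ₂,δ₃) define l(β,λ;x) = δ₁·log( exp[−e^{β'z}(Λ(u)−Λ(q))] − exp[−e^{β'z}(Λ(v)−Λ(q))] ) + δ₂·[ −e^{β'z}(Λ(v)−Λ(q)) ] + δ₃·[ −e^{β'z}(Λ(t)−Λ(q)) + β'z + log λ(t) ], where δ₁,δ₂,δ₃ ∈ {0,1} with δ₁+δ₂+δ₃ = 1, |z| ≤ z₀, 0 ≤ q ≤ min(t,u,v), t,u,v ∈ [0,τ], and v − u ≥ η whenever δ₁ = 1. Then there exists a constant C, depending only on a, b, τ, η, c₀, z₀ and d, such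 that for all pairs (β₁,λ₁), (β₂,λ₂) satisfying these constraints and all admissible observations x, |l(β₁,λ₁;x) − l(β₂,λ₂;x)| ≤ C·( |β₁−β₂| + sup_{s∈[0,τ]} |λ₁(s)−λ₂(s)| ). -/
open MeasureTheory

/-- The baseline cumulative hazard `Λ(t) = ∫_0^t λ(u) du`. -/
noncomputable def cumHaz (lam : ℝ → ℝ) (t : ℝ) : ℝ := ∫ u in (0:ℝ)..t, lam u

/-- The log-likelihood contribution `l(β,λ;x)` of a single observation
`x = (t,u,v,q,z,δ₁,δ₂,δ₃)` under the non-mixture Cox cure model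
`S(t|z) = exp(−e^{β'z} Λ(t))` with left truncation at `q`. -/
noncomputable def cureLoglik {d : ℕ} (β : EuclideanSpace ℝ (Fin d)) (lam : ℝ → ℝ)
    (t u v q : ℝ) (z : EuclideanSpace ℝ (Fin d)) (δ₁ δ₂ δ₃ : ℝ) : ℝ :=
  δ₁ * Real.log
      (Real.exp (-(Real.exp (inner ℝ β z : ℝ) * (cumHaz lam u - cumHaz lam q)))
        - Real.exp (-(Real.exp (inner ℝ β z : ℝ) * (cumHaz lam v - cumHaz lam q))))
  + δ₂ * (-(Real.exp (inner ℝ β z : ℝ) * (cumHaz lam v - cumHaz lam q)))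
  + δ₃ * (-(Real.exp (inner ℝ β z : ℝ) * (cumHaz lam t - cumHaz lam q))
        + (inner ℝ β z : ℝ) + Real.log (lam t))

/-! With `A(s) = condCumHaz (β'z) λ q s = e^{β'z} (Λ(s) − Λ(q))`, every term of the
log-likelihood is a function of `A(t), A(u), A(v), β'z` and `λ(t)`. On the admissible set
`|β'z| ≤ c₀ z₀` and `Λ(s) − Λ(q) ∈ [0, b τ]`, so `A(s)` is Lipschitz in `(β, λ)` (sup norm on `λ`).
This handles the right-censored term, and the exact-event term too since `log` is
`1/a`-Lipschitz on `[a, ∞)`. For the interval-censored term the gap `v − u ≥ η` keeps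
`exp (-A(u)) − exp (-A(v)) ≥ e^{-e^{c₀z₀} b τ} (1 − e^{-e^{-c₀z₀} a η}) > 0`, where `log` is
Lipschitz again. -/

open Real Set

theorem Real.abs_exp_sub_exp_le_of_le {x y c : ℝ} (hx : x ≤ c) (hy : y ≤ c) :
    |exp x - exp y| ≤ exp c * |x - y| := by
  simpa only [Real.norm_eq_abs] using (convex_Iic c).norm_image_sub_le_of_norm_deriv_le
    (fun _ _ => differentiableAt_exp)
    (fun w hw => by simpa [abs_of_pos (exp_pos w)] using exp_le_exp.2 hw) hy hx

theorem Real.abs_exp_neg_sub_exp_neg_le {x y : ℝ} (hx : 0 ≤ x) (hy : 0 ≤ y) :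
    |exp (-x) - exp (-y)| ≤ |x - y| := by
  simpa [abs_sub_comm, neg_add_eq_sub] using
    abs_exp_sub_exp_le_of_le (neg_nonpos.2 hx) (neg_nonpos.2 hy)

theorem Real.abs_log_sub_log_le_of_le {x y a : ℝ} (ha : 0 < a) (hx : a ≤ x) (hy : a ≤ y) :
    |log x - log y| ≤ |x - y| / a := by
  have h := (convex_Ici a).norm_image_sub_le_of_norm_deriv_le
    (fun w hw => differentiableAt_log (ha.trans_le hw).ne')
    (fun w (hw : a ≤ w) => by
      rw [deriv_log, norm_inv, Real.norm_of_nonneg (ha.le.trans hw)]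
      exact inv_anti₀ ha hw) hy hx
  simpa only [Real.norm_eq_abs, div_eq_inv_mul] using h

theorem Real.exp_neg_mul_one_sub_exp_neg_le {x y X r : ℝ} (hX : x ≤ X) (hr : 0 ≤ r)
    (hxy : r ≤ y - x) : exp (-X) * (1 - exp (-r)) ≤ exp (-x) - exp (-y) := by
  have hsplit : exp (-x) - exp (-y) = exp (-x) * (1 - exp (-(y - x))) := by
    rw [mul_sub, mul_one, ← exp_add]; ring_nf
  rw [hsplit]
  gcongr
  simpa using exp_le_one_iff.2 (neg_nonpos.2 hr)

theorem Real.abs_log_exp_neg_sub_exp_neg_sub_le {x₁ x₂ y₁ y₂ X r : ℝ} (hr : 0 < r)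
    (hx₁ : x₁ ∈ Icc 0 X) (hx₂ : x₂ ∈ Icc 0 X) (hy₁ : r ≤ y₁ - x₁) (hy₂ : r ≤ y₂ - x₂) :
    |log (exp (-x₁) - exp (-y₁)) - log (exp (-x₂) - exp (-y₂))|
      ≤ (|x₁ - x₂| + |y₁ - y₂|) / (exp (-X) * (1 - exp (-r))) := by
  have hm : 0 < exp (-X) * (1 - exp (-r)) :=
    mul_pos (exp_pos _) (sub_pos.2 (exp_lt_one_iff.2 (neg_lt_zero.2 hr)))
  refine (abs_log_sub_log_le_of_le hm (exp_neg_mul_one_sub_exp_neg_le hx₁.2 hr.le hy₁)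
    (exp_neg_mul_one_sub_exp_neg_le hx₂.2 hr.le hy₂)).trans ?_
  gcongr
  calc |exp (-x₁) - exp (-y₁) - (exp (-x₂) - exp (-y₂))|
      = |(exp (-x₁) - exp (-x₂)) - (exp (-y₁) - exp (-y₂))| := by ring_nf
    _ ≤ |exp (-x₁) - exp (-x₂)| + |exp (-y₁) - exp (-y₂)| := abs_sub _ _
    _ ≤ |x₁ - x₂| + |y₁ - y₂| :=
      add_le_add (abs_exp_neg_sub_exp_neg_le hx₁.1 hx₂.1)
        (abs_exp_neg_sub_exp_neg_le (by linarith [hx₁.1]) (by linarith [hx₂.1]))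

theorem abs_mul_sub_mul_le {α : Type*} [CommRing α] [LinearOrder α] [IsStrictOrderedRing α]
    (x₁ x₂ y₁ y₂ : α) :
    |x₁ * y₁ - x₂ * y₂| ≤ |x₁| * |y₁ - y₂| + |x₁ - x₂| * |y₂| := by
  rw [← abs_mul, ← abs_mul]
  exact (abs_add_le _ _).trans_eq' (by ring_nf)

theorem le_biSup_of_forall_le {ι α : Type*} [ConditionallyCompleteLattice α] {f : ι → α}
    {S : Set ι} {B : α} (hB : ∀ j ∈ S, f j ≤ B) {i : ι} (hi : i ∈ S) :
    f i ≤ ⨆ j ∈ S, f j :=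
  le_ciSup₂ (f := fun j (_ : j ∈ S) => f j) ⟨B, by
    simp only [upperBounds, mem_iUnion, mem_range]
    rintro _ ⟨j, hj, rfl⟩
    exact hB j hj⟩ i hi

section CumHaz

variable {lam lam₁ lam₂ : ℝ → ℝ} {a b τ q s M : ℝ}

theorem intervalIntegrable_of_mem_Icc (hm : Measurable lam)
    (hlam : ∀ x ∈ Icc 0 τ, lam x ∈ Icc a b) (hq : q ∈ Icc 0 τ) (hs : s ∈ Icc 0 τ) :
    IntervalIntegrable lam volume q s := by
  have hint : IntegrableOn lam (Icc 0 τ) := by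
    refine Measure.integrableOn_of_bounded (M := max |a| |b|) (by simp)
      hm.aestronglyMeasurable ?_
    filter_upwards [ae_restrict_mem measurableSet_Icc] with x hx
    exact abs_le_max_abs_abs (hlam x hx).1 (hlam x hx).2
  exact (hint.mono_set (uIcc_subset_Icc hq hs)).intervalIntegrable

theorem cumHaz_sub_cumHaz (hm : Measurable lam) (hlam : ∀ x ∈ Icc 0 τ, lam x ∈ Icc a b)
    (hq : q ∈ Icc 0 τ) (hs : s ∈ Icc 0 τ) :
    cumHaz lam s - cumHaz lam q = ∫ x in q..s, lam x := by
  have h0 : (0 : ℝ) ∈ Icc 0 τ := ⟨le_rfl, hq.1.trans hq.2⟩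
  exact intervalIntegral.integral_interval_sub_left
    (intervalIntegrable_of_mem_Icc hm hlam h0 hs) (intervalIntegrable_of_mem_Icc hm hlam h0 hq)

theorem cumHaz_sub_cumHaz_mem_Icc (hm : Measurable lam)
    (hlam : ∀ x ∈ Icc 0 τ, lam x ∈ Icc a b) (hq : 0 ≤ q) (hqs : q ≤ s) (hs : s ≤ τ) :
    cumHaz lam s - cumHaz lam q ∈ Icc (a * (s - q)) (b * (s - q)) := by
  have hq' : q ∈ Icc 0 τ := ⟨hq, hqs.trans hs⟩
  have hs' : s ∈ Icc 0 τ := ⟨hq.trans hqs, hs⟩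
  have hint := intervalIntegrable_of_mem_Icc hm hlam hq' hs'
  have hlam' : ∀ x ∈ Icc q s, lam x ∈ Icc a b :=
    fun x hx => hlam x ⟨hq.trans hx.1, hx.2.trans hs⟩
  rw [cumHaz_sub_cumHaz hm hlam hq' hs', mul_comm a, mul_comm b]
  constructor
  · simpa using intervalIntegral.integral_mono_on hqs intervalIntegrable_const hint
      (fun x hx => (hlam' x hx).1)
  · simpa using intervalIntegral.integral_mono_on hqs hint intervalIntegrable_const
      (fun x hx => (hlam' x hx).2)

theorem abs_cumHaz_sub_cumHaz_sub_le (hm₁ : Measurable lam₁) (hm₂ : Measurable lam₂)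
    (hlam₁ : ∀ x ∈ Icc 0 τ, lam₁ x ∈ Icc a b) (hlam₂ : ∀ x ∈ Icc 0 τ, lam₂ x ∈ Icc a b)
    (hM : ∀ x ∈ Icc 0 τ, |lam₁ x - lam₂ x| ≤ M) (hq : 0 ≤ q) (hqs : q ≤ s) (hs : s ≤ τ) :
    |(cumHaz lam₁ s - cumHaz lam₁ q) - (cumHaz lam₂ s - cumHaz lam₂ q)| ≤ M * (s - q) := by
  have hq' : q ∈ Icc 0 τ := ⟨hq, hqs.trans hs⟩
  have hs' : s ∈ Icc 0 τ := ⟨hq.trans hqs, hs⟩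
  rw [cumHaz_sub_cumHaz hm₁ hlam₁ hq' hs', cumHaz_sub_cumHaz hm₂ hlam₂ hq' hs',
    ← intervalIntegral.integral_sub (intervalIntegrable_of_mem_Icc hm₁ hlam₁ hq' hs')
      (intervalIntegrable_of_mem_Icc hm₂ hlam₂ hq' hs'), ← abs_of_nonneg (sub_nonneg.2 hqs)]
  refine intervalIntegral.norm_integral_le_of_norm_le_const fun x hx =>
    (Real.norm_eq_abs _).trans_le (hM x ?_)
  rw [uIoc_of_le hqs] at hx
  exact ⟨hq.trans hx.1.le, hx.2.trans hs⟩

end CumHaz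

noncomputable def condCumHaz (θ : ℝ) (lam : ℝ → ℝ) (q s : ℝ) : ℝ :=
  exp θ * (cumHaz lam s - cumHaz lam q)

section CondCumHaz

variable {lam lam₁ lam₂ : ℝ → ℝ} {θ θ₁ θ₂ a b c ε τ η M q s u v : ℝ}

theorem condCumHaz_mem_Icc (hm : Measurable lam) (hlam : ∀ x ∈ Icc 0 τ, lam x ∈ Icc a b)
    (ha : 0 ≤ a) (hθ : θ ≤ c) (hq : 0 ≤ q) (hqs : q ≤ s) (hs : s ≤ τ) :
    condCumHaz θ lam q s ∈ Icc 0 (exp c * (b * τ)) := by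
  obtain ⟨hlow, hupp⟩ := cumHaz_sub_cumHaz_mem_Icc hm hlam hq hqs hs
  have hlamq := hlam q ⟨hq, hqs.trans hs⟩
  have hb : 0 ≤ b := ha.trans (hlamq.1.trans hlamq.2)
  have hΔ : 0 ≤ cumHaz lam s - cumHaz lam q := (mul_nonneg ha (sub_nonneg.2 hqs)).trans hlow
  refine ⟨mul_nonneg (exp_pos θ).le hΔ, mul_le_mul (exp_le_exp.2 hθ) ?_ hΔ (exp_pos c).le⟩
  exact hupp.trans (mul_le_mul_of_nonneg_left (by linarith) hb)

theorem le_condCumHaz_sub_condCumHaz (hm : Measurable lam)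
    (hlam : ∀ x ∈ Icc 0 τ, lam x ∈ Icc a b) (ha : 0 ≤ a) (hθ : -c ≤ θ) (hη : 0 ≤ η)
    (hq : 0 ≤ q) (hqu : q ≤ u) (huv : η ≤ v - u) (hv : v ≤ τ) :
    exp (-c) * (a * η) ≤ condCumHaz θ lam q v - condCumHaz θ lam q u := by
  have hu : 0 ≤ u := hq.trans hqu
  have hlow := (cumHaz_sub_cumHaz_mem_Icc hm hlam hu (by linarith) hv).1
  have hsub : condCumHaz θ lam q v - condCumHaz θ lam q u
      = exp θ * (cumHaz lam v - cumHaz lam u) := by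
    unfold condCumHaz; ring
  rw [hsub]
  exact mul_le_mul (exp_le_exp.2 hθ) ((mul_le_mul_of_nonneg_left huv ha).trans hlow)
    (mul_nonneg ha hη) (exp_pos θ).le

theorem abs_condCumHaz_sub_condCumHaz_le (hm₁ : Measurable lam₁) (hm₂ : Measurable lam₂)
    (hlam₁ : ∀ x ∈ Icc 0 τ, lam₁ x ∈ Icc a b) (hlam₂ : ∀ x ∈ Icc 0 τ, lam₂ x ∈ Icc a b)
    (hM : ∀ x ∈ Icc 0 τ, |lam₁ x - lam₂ x| ≤ M) (ha : 0 ≤ a) (hθ₁ : θ₁ ≤ c) (hθ₂ : θ₂ ≤ c)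
    (hθ : |θ₁ - θ₂| ≤ ε) (hq : 0 ≤ q) (hqs : q ≤ s) (hs : s ≤ τ) :
    |condCumHaz θ₁ lam₁ q s - condCumHaz θ₂ lam₂ q s| ≤ exp c * τ * (M + b * ε) := by
  obtain ⟨hΔ₂low, hΔ₂upp⟩ := cumHaz_sub_cumHaz_mem_Icc hm₂ hlam₂ hq hqs hs
  have hΔ := abs_cumHaz_sub_cumHaz_sub_le hm₁ hm₂ hlam₁ hlam₂ hM hq hqs hs
  have hΔ₂ : 0 ≤ cumHaz lam₂ s - cumHaz lam₂ q := (mul_nonneg ha (sub_nonneg.2 hqs)).trans hΔ₂low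
  have hM0 : 0 ≤ M := (abs_nonneg _).trans (hM q ⟨hq, hqs.trans hs⟩)
  have hlamq := hlam₂ q ⟨hq, hqs.trans hs⟩
  have hb : 0 ≤ b := ha.trans (hlamq.1.trans hlamq.2)
  have hε : 0 ≤ ε := (abs_nonneg _).trans hθ
  have hexp : |exp θ₁ - exp θ₂| ≤ exp c * ε :=
    (abs_exp_sub_exp_le_of_le hθ₁ hθ₂).trans (by gcongr)
  calc |condCumHaz θ₁ lam₁ q s - condCumHaz θ₂ lam₂ q s|
      ≤ |exp θ₁| * |(cumHaz lam₁ s - cumHaz lam₁ q) - (cumHaz lam₂ s - cumHaz lam₂ q)|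
        + |exp θ₁ - exp θ₂| * |cumHaz lam₂ s - cumHaz lam₂ q| := abs_mul_sub_mul_le _ _ _ _
    _ ≤ exp c * (M * (s - q)) + exp c * ε * (b * (s - q)) := by
        rw [abs_of_pos (exp_pos θ₁), abs_of_nonneg hΔ₂]
        gcongr
    _ = exp c * (s - q) * (M + b * ε) := by ring
    _ ≤ exp c * τ * (M + b * ε) := by gcongr; linarith

end CondCumHaz

theorem abs_sub_le_biSup_abs_sub {lam₁ lam₂ : ℝ → ℝ} {a b τ s : ℝ}
    (hlam₁ : ∀ x ∈ Icc 0 τ, lam₁ x ∈ Icc a b) (hlam₂ : ∀ x ∈ Icc 0 τ, lam₂ x ∈ Icc a b)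
    (hs : s ∈ Icc 0 τ) : |lam₁ s - lam₂ s| ≤ ⨆ x ∈ Icc 0 τ, |lam₁ x - lam₂ x| :=
  le_biSup_of_forall_le (B := b - a) (fun x hx => abs_sub_le_iff.2
    ⟨by linarith [(hlam₁ x hx).2, (hlam₂ x hx).1], by linarith [(hlam₁ x hx).1, (hlam₂ x hx).2]⟩) hs

theorem abs_real_inner_le_of_norm_le {F : Type*} [NormedAddCommGroup F] [InnerProductSpace ℝ F]
    {x y : F} {c₀ z₀ : ℝ} (hx : ‖x‖ ≤ c₀) (hy : ‖y‖ ≤ z₀) : |inner ℝ x y| ≤ c₀ * z₀ :=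
  (abs_real_inner_le_norm x y).trans (mul_le_mul hx hy (norm_nonneg y) ((norm_nonneg x).trans hx))

theorem abs_condCumHaz_inner_sub_le {F : Type*} [NormedAddCommGroup F] [InnerProductSpace ℝ F]
    {β₁ β₂ z : F} {lam₁ lam₂ : ℝ → ℝ} {a b τ c₀ z₀ D q s : ℝ} (hm₁ : Measurable lam₁)
    (hm₂ : Measurable lam₂) (hlam₁ : ∀ x ∈ Icc 0 τ, lam₁ x ∈ Icc a b)
    (hlam₂ : ∀ x ∈ Icc 0 τ, lam₂ x ∈ Icc a b) (ha : 0 ≤ a) (hβ₁ : ‖β₁‖ ≤ c₀)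
    (hβ₂ : ‖β₂‖ ≤ c₀) (hz : ‖z‖ ≤ z₀) (hβD : ‖β₁ - β₂‖ ≤ D)
    (hlamD : ∀ x ∈ Icc 0 τ, |lam₁ x - lam₂ x| ≤ D) (hq : 0 ≤ q) (hqs : q ≤ s) (hs : s ≤ τ) :
    |condCumHaz (inner ℝ β₁ z) lam₁ q s - condCumHaz (inner ℝ β₂ z) lam₂ q s|
      ≤ exp (c₀ * z₀) * τ * (1 + b * z₀) * D := by
  have hθD : |inner ℝ β₁ z - inner ℝ β₂ z| ≤ D * z₀ := by
    rw [← inner_sub_left]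
    exact abs_real_inner_le_of_norm_le hβD hz
  exact (abs_condCumHaz_sub_condCumHaz_le hm₁ hm₂ hlam₁ hlam₂ hlamD ha
    (abs_le.1 (abs_real_inner_le_of_norm_le hβ₁ hz)).2
    (abs_le.1 (abs_real_inner_le_of_norm_le hβ₂ hz)).2 hθD hq hqs hs).trans_eq (by ring)

section Observation

variable {d : ℕ} {β z : EuclideanSpace ℝ (Fin d)} {lam : ℝ → ℝ} {t u v q : ℝ}

theorem cureLoglik_intervalCensored :
    cureLoglik β lam t u v q z 1 0 0
      = log (exp (-condCumHaz (inner ℝ β z) lam q u)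
          - exp (-condCumHaz (inner ℝ β z) lam q v)) := by
  simp [cureLoglik, condCumHaz]

theorem cureLoglik_rightCensored :
    cureLoglik β lam t u v q z 0 1 0 = -condCumHaz (inner ℝ β z) lam q v := by
  simp [cureLoglik, condCumHaz]

theorem cureLoglik_exact :
    cureLoglik β lam t u v q z 0 0 1
      = -condCumHaz (inner ℝ β z) lam q t + inner ℝ β z + log (lam t) := by
  simp [cureLoglik, condCumHaz]

theorem abs_cureLoglik_exact_sub_le {β₁ β₂ : EuclideanSpace ℝ (Fin d)} {lam₁ lam₂ : ℝ → ℝ}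
    {a z₀ : ℝ} (ha : 0 < a) (hlam₁ : a ≤ lam₁ t) (hlam₂ : a ≤ lam₂ t) (hz : ‖z‖ ≤ z₀) :
    |cureLoglik β₁ lam₁ t u v q z 0 0 1 - cureLoglik β₂ lam₂ t u v q z 0 0 1|
      ≤ |condCumHaz (inner ℝ β₁ z) lam₁ q t - condCumHaz (inner ℝ β₂ z) lam₂ q t|
        + ‖β₁ - β₂‖ * z₀ + |lam₁ t - lam₂ t| / a := by
  rw [cureLoglik_exact, cureLoglik_exact]
  set A₁ := condCumHaz (inner ℝ β₁ z) lam₁ q t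
  set A₂ := condCumHaz (inner ℝ β₂ z) lam₂ q t
  calc _ = |-(A₁ - A₂) + (inner ℝ β₁ z - inner ℝ β₂ z) + (log (lam₁ t) - log (lam₂ t))| := by
        ring_nf
    _ ≤ |A₁ - A₂| + |inner ℝ β₁ z - inner ℝ β₂ z| + |log (lam₁ t) - log (lam₂ t)| := by
        simpa only [abs_neg] using abs_add_three (-(A₁ - A₂)) _ _
    _ ≤ _ := by
        gcongr
        · rw [← inner_sub_left]
          exact abs_real_inner_le_of_norm_le le_rfl hz
        · exact abs_log_sub_log_le_of_le ha hlam₁ hlam₂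

theorem abs_cureLoglik_rightCensored_sub {β₁ β₂ : EuclideanSpace ℝ (Fin d)}
    {lam₁ lam₂ : ℝ → ℝ} :
    |cureLoglik β₁ lam₁ t u v q z 0 1 0 - cureLoglik β₂ lam₂ t u v q z 0 1 0|
      = |condCumHaz (inner ℝ β₁ z) lam₁ q v - condCumHaz (inner ℝ β₂ z) lam₂ q v| := by
  rw [cureLoglik_rightCensored, cureLoglik_rightCensored, neg_sub_neg, abs_sub_comm]

theorem abs_cureLoglik_intervalCensored_sub_le {β₁ β₂ : EuclideanSpace ℝ (Fin d)}
    {lam₁ lam₂ : ℝ → ℝ} {a b τ η c₀ z₀ : ℝ} (hm₁ : Measurable lam₁) (hm₂ : Measurable lam₂)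
    (hlam₁ : ∀ x ∈ Icc 0 τ, lam₁ x ∈ Icc a b) (hlam₂ : ∀ x ∈ Icc 0 τ, lam₂ x ∈ Icc a b)
    (ha : 0 < a) (hη : 0 < η) (hβ₁ : ‖β₁‖ ≤ c₀) (hβ₂ : ‖β₂‖ ≤ c₀) (hz : ‖z‖ ≤ z₀)
    (hq : 0 ≤ q) (hqu : q ≤ u) (huv : η ≤ v - u) (hu : u ≤ τ) (hv : v ≤ τ) :
    |cureLoglik β₁ lam₁ t u v q z 1 0 0 - cureLoglik β₂ lam₂ t u v q z 1 0 0|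
      ≤ (|condCumHaz (inner ℝ β₁ z) lam₁ q u - condCumHaz (inner ℝ β₂ z) lam₂ q u|
          + |condCumHaz (inner ℝ β₁ z) lam₁ q v - condCumHaz (inner ℝ β₂ z) lam₂ q v|)
        / (exp (-(exp (c₀ * z₀) * (b * τ))) * (1 - exp (-(exp (-(c₀ * z₀)) * (a * η))))) := by
  have hθ₁ := abs_le.1 (abs_real_inner_le_of_norm_le hβ₁ hz)
  have hθ₂ := abs_le.1 (abs_real_inner_le_of_norm_le hβ₂ hz)
  rw [cureLoglik_intervalCensored, cureLoglik_intervalCensored]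
  exact abs_log_exp_neg_sub_exp_neg_sub_le (by positivity)
    (condCumHaz_mem_Icc hm₁ hlam₁ ha.le hθ₁.2 hq hqu hu)
    (condCumHaz_mem_Icc hm₂ hlam₂ ha.le hθ₂.2 hq hqu hu)
    (le_condCumHaz_sub_condCumHaz hm₁ hlam₁ ha.le hθ₁.1 hη.le hq hqu huv hv)
    (le_condCumHaz_sub_condCumHaz hm₂ hlam₂ ha.le hθ₂.1 hη.le hq hqu huv hv)

end Observation

theorem cureLoglik_lipschitz_general
    (d : ℕ) (a b τ η c₀ z₀ : ℝ)
    (ha : 0 < a) (hab : a ≤ b) (hτ : 0 < τ) (hη : 0 < η) (hz₀ : 0 < z₀) :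
    ∃ C : ℝ, ∀ (β₁ β₂ : EuclideanSpace ℝ (Fin d)) (lam₁ lam₂ : ℝ → ℝ)
      (t u v q : ℝ) (z : EuclideanSpace ℝ (Fin d)) (δ₁ δ₂ δ₃ : ℝ),
      ‖β₁‖ ≤ c₀ → ‖β₂‖ ≤ c₀ →
      Measurable lam₁ → Measurable lam₂ →
      (∀ s ∈ Set.Icc (0:ℝ) τ, lam₁ s ∈ Set.Icc a b) →
      (∀ s ∈ Set.Icc (0:ℝ) τ, lam₂ s ∈ Set.Icc a b) →
      (δ₁ = 0 ∨ δ₁ = 1) → (δ₂ = 0 ∨ δ₂ = 1) → (δ₃ = 0 ∨ δ₃ = 1) →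
      δ₁ + δ₂ + δ₃ = 1 →
      ‖z‖ ≤ z₀ →
      t ∈ Set.Icc (0:ℝ) τ → u ∈ Set.Icc (0:ℝ) τ → v ∈ Set.Icc (0:ℝ) τ →
      0 ≤ q → q ≤ t → q ≤ u → q ≤ v →
      (δ₁ = 1 → η ≤ v - u) →
      |cureLoglik β₁ lam₁ t u v q z δ₁ δ₂ δ₃ - cureLoglik β₂ lam₂ t u v q z δ₁ δ₂ δ₃|
        ≤ C * (‖β₁ - β₂‖ + ⨆ s ∈ Set.Icc (0:ℝ) τ, |lam₁ s - lam₂ s|) := by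
  set E := exp (c₀ * z₀)
  set K := E * τ * (1 + b * z₀)
  set m := exp (-(E * (b * τ))) * (1 - exp (-(exp (-(c₀ * z₀)) * (a * η))))
  have hm : 0 < m :=
    mul_pos (exp_pos _) (sub_pos.2 (exp_lt_one_iff.2 (neg_lt_zero.2 (by positivity))))
  refine ⟨2 * K / m + K + z₀ + 1 / a, ?_⟩
  intro β₁ β₂ lam₁ lam₂ t u v q z δ₁ δ₂ δ₃ hβ₁ hβ₂ hm₁ hm₂ hlam₁ hlam₂ hδ₁ hδ₂ hδ₃ hδ hz ht hu hv
    hq hqt hqu hqv hηuv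
  set M := ⨆ s ∈ Icc (0:ℝ) τ, |lam₁ s - lam₂ s|
  have hM : 0 ≤ M := (abs_nonneg _).trans (abs_sub_le_biSup_abs_sub hlam₁ hlam₂ ht)
  set D := ‖β₁ - β₂‖ + M
  have hβD : ‖β₁ - β₂‖ ≤ D := le_add_of_nonneg_right hM
  have hlamD : ∀ s ∈ Icc (0:ℝ) τ, |lam₁ s - lam₂ s| ≤ D := fun s hs =>
    (abs_sub_le_biSup_abs_sub hlam₁ hlam₂ hs).trans (le_add_of_nonneg_left (norm_nonneg _))
  have hA : ∀ s, q ≤ s → s ≤ τ →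
      |condCumHaz (inner ℝ β₁ z) lam₁ q s - condCumHaz (inner ℝ β₂ z) lam₂ q s| ≤ K * D :=
    fun s => abs_condCumHaz_inner_sub_le hm₁ hm₂ hlam₁ hlam₂ ha.le hβ₁ hβ₂ hz hβD hlamD hq
  have hb : 0 < b := ha.trans_le hab
  have hterms : 0 ≤ 2 * K / m * D ∧ 0 ≤ K * D ∧ 0 ≤ z₀ * D ∧ 0 ≤ D / a :=
    ⟨by positivity, by positivity, by positivity, by positivity⟩
  rw [show (2 * K / m + K + z₀ + 1 / a) * D = 2 * K / m * D + K * D + z₀ * D + D / a by ring]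
  rcases hδ₁ with rfl | rfl <;> rcases hδ₂ with rfl | rfl <;> rcases hδ₃ with rfl | rfl <;>
    norm_num at hδ
  · refine (abs_cureLoglik_exact_sub_le ha (hlam₁ t ht).1 (hlam₂ t ht).1 hz).trans ?_
    linarith [hA t hqt ht.2, mul_le_mul_of_nonneg_right hβD hz₀.le,
      div_le_div_of_nonneg_right (hlamD t ht) ha.le]
  · rw [abs_cureLoglik_rightCensored_sub]
    linarith [hA v hqv hv.2]
  · refine (abs_cureLoglik_intervalCensored_sub_le hm₁ hm₂ hlam₁ hlam₂ ha hη hβ₁ hβ₂ hz hq hqu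
      (hηuv rfl) hu.2 hv.2).trans ?_
    have := div_le_div_of_nonneg_right (add_le_add (hA u hqu hu.2) (hA v hqv hv.2)) hm.le
    linarith [show (K * D + K * D) / m = 2 * K / m * D by ring]

/-- **Uniform Lipschitz property of the cure-model log-likelihood** (the analytic content
behind the bracketing-number bound for the class `𝔏` in the proof of Theorem 1 of the
paper): there is a constant `C`, depending only on `a, b, τ, η, c₀, z₀, d`, such that
`|l(β₁,λ₁;x) − l(β₂,λ₂;x)| ≤ C·(|β₁−β₂| + sup_{s∈[0,τ]} |λ₁(s)−λ₂(s)|)` over all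
admissible parameters and observations. -/
theorem cureLoglik_lipschitz
    (d : ℕ) (hd : 1 ≤ d) (a b τ η c₀ z₀ : ℝ)
    (ha : 0 < a) (hab : a ≤ b) (hτ : 0 < τ) (hη : 0 < η) (hc₀ : 0 < c₀) (hz₀ : 0 < z₀) :
    ∃ C : ℝ, ∀ (β₁ β₂ : EuclideanSpace ℝ (Fin d)) (lam₁ lam₂ : ℝ → ℝ)
      (t u v q : ℝ) (z : EuclideanSpace ℝ (Fin d)) (δ₁ δ₂ δ₃ : ℝ),
      ‖β₁‖ ≤ c₀ → ‖β₂‖ ≤ c₀ →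
      Measurable lam₁ → Measurable lam₂ →
      (∀ s ∈ Set.Icc (0:ℝ) τ, lam₁ s ∈ Set.Icc a b) →
      (∀ s ∈ Set.Icc (0:ℝ) τ, lam₂ s ∈ Set.Icc a b) →
      (δ₁ = 0 ∨ δ₁ = 1) → (δ₂ = 0 ∨ δ₂ = 1) → (δ₃ = 0 ∨ δ₃ = 1) →
      δ₁ + δ₂ + δ₃ = 1 →
      ‖z‖ ≤ z₀ →
      t ∈ Set.Icc (0:ℝ) τ → u ∈ Set.Icc (0:ℝ) τ → v ∈ Set.Icc (0:ℝ) τ →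
      0 ≤ q → q ≤ t → q ≤ u → q ≤ v →
      (δ₁ = 1 → η ≤ v - u) →
      |cureLoglik β₁ lam₁ t u v q z δ₁ δ₂ δ₃ - cureLoglik β₂ lam₂ t u v q z δ₁ δ₂ δ₃|
        ≤ C * (‖β₁ - β₂‖ + ⨆ s ∈ Set.Icc (0:ℝ) τ, |lam₁ s - lam₂ s|) :=
  cureLoglik_lipschitz_general d a b τ η c₀ z₀ ha hab hτ hη hz₀
end
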